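/- arXiv:2604.26531 — 4 statements merged into one kernel-verified Lean document; each statement's English description precedes it below -/
import Mathlib

section
/- If |θ − θ'| ≤ ε and |φ − φ'| ≤ ε, then the operator norm of M_{θ,φ} − M_{θ',φ'} (as a linear map ℝ³ → ℝ² with Euclidean norms) is at most √2 · ε. -/
open Real Matrix

lemma aux1' (p q p' q' : ℝ) (hp : p^2+q^2 = 1) (hp' : p'^2+q'^2 = 1) :
    (p - p')^2 ≤ (2 - 2*(p*p'+q*q')) * (1 - p*p') := by
  nlinarith [sq_nonneg (p-p'), sq_nonneg (q-q'), sq_nonneg (q+q'), sq_nonneg (p+p'),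
    sq_nonneg ((p-p')*(q-q')), sq_nonneg ((p-p')*(q+q')), sq_nonneg (p*q'-p'*q), sq_nonneg (p*q'+p'*q)]

lemma psd2' (X Y Z u v : ℝ) (hX : 0 ≤ X) (hZ : 0 ≤ Z) (hXZ : Y^2 ≤ X*Z) :
    2*Y*u*v ≤ X*u^2 + Z*v^2 := by
  rcases (eq_or_lt_of_le hX).imp Eq.symm id with h0 | hpos
  · have hY : Y = 0 := by nlinarith [sq_nonneg Y]
    rw [h0, hY]
    nlinarith [mul_nonneg hZ (sq_nonneg v)]
  · nlinarith [sq_nonneg (X*u - Y*v), mul_nonneg (sub_nonneg.2 hXZ) (sq_nonneg v), hpos.le,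
      mul_pos hpos hpos]

lemma cs3' (x0 x1 x2 w0 w1 w2 : ℝ) :
    (x0*w0+x1*w1+x2*w2)^2 ≤ (x0^2+x1^2+x2^2)*(w0^2+w1^2+w2^2) := by
  nlinarith [sq_nonneg (x0*w1 - x1*w0), sq_nonneg (x0*w2 - x2*w0), sq_nonneg (x1*w2 - x2*w1)]

set_option maxHeartbeats 2000000 in
lemma core' (a b a' b' p q p' q' x0 x1 x2 ε : ℝ)
    (ha : a^2+b^2 = 1) (ha' : a'^2+b'^2 = 1) (hp : p^2+q^2 = 1) (hp' : p'^2+q'^2 = 1)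
    (ht : 1 - (a*a'+b*b') ≤ ε^2/2) (hu : 1 - (p*p'+q*q') ≤ ε^2/2) :
    ((b'-b)*x0 + (a-a')*x1)^2
      + ((a'*p'-a*p)*x0 + (b'*p'-b*p)*x1 + (q-q')*x2)^2
      ≤ 2*ε^2*(x0^2+x1^2+x2^2) := by
  obtain ⟨t, htdef⟩ : ∃ t, t = 1 - (a*a'+b*b') := ⟨_, rfl⟩
  obtain ⟨u, hudef⟩ : ∃ u, u = 1 - (p*p'+q*q') := ⟨_, rfl⟩
  obtain ⟨y0, hy0⟩ : ∃ y, y = (b'-b)*x0 + (a-a')*x1 := ⟨_, rfl⟩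
  obtain ⟨y1, hy1⟩ : ∃ y, y = (a'*p'-a*p)*x0 + (b'*p'-b*p)*x1 + (q-q')*x2 := ⟨_, rfl⟩
  obtain ⟨w0, hw0⟩ : ∃ w, w = (b'-b)*y0 + (a'*p'-a*p)*y1 := ⟨_, rfl⟩
  obtain ⟨w1, hw1⟩ : ∃ w, w = (a-a')*y0 + (b'*p'-b*p)*y1 := ⟨_, rfl⟩
  obtain ⟨w2, hw2⟩ : ∃ w, w = (q-q')*y1 := ⟨_, rfl⟩
  have h2t : 2*t = (a-a')^2 + (b-b')^2 := by rw [htdef]; linear_combination -ha - ha'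
  have h2u : 2*u = (p-p')^2 + (q-q')^2 := by rw [hudef]; linear_combination -hp - hp'
  have ht0 : 0 ≤ t := by nlinarith only [sq_nonneg (a-a'), sq_nonneg (b-b'), h2t]
  have hu0 : 0 ≤ u := by nlinarith only [sq_nonneg (p-p'), sq_nonneg (q-q'), h2u]
  have hpp : p*p' ≤ 1 := by nlinarith only [sq_nonneg (p-p'), sq_nonneg (q-q'), hp, hp']
  have hP00 : (b'-b)^2 + (a-a')^2 = 2*t := by rw [htdef]; linear_combination ha + ha'
  have hP11 : (a'*p'-a*p)^2 + (b'*p'-b*p)^2 + (q-q')^2 = 2*u + 2*(p*p')*t := by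
    rw [htdef, hudef]; linear_combination p^2*ha + p'^2*ha' + hp + hp'
  have hid1 : y0^2 + y1^2 = x0*w0 + x1*w1 + x2*w2 := by
    rw [hw0, hw1, hw2, hy0, hy1]; ring
  have hY1 : (a*b'-a'*b)^2 ≤ 2*t := by
    have hid : (a*b'-a'*b)^2 + (a*a'+b*b')^2 = 1 := by linear_combination (a'^2+b'^2)*ha + ha'
    have h3 : a*a'+b*b' = 1 - t := by rw [htdef]; ring
    have h4 : (a*a'+b*b')^2 = (1-t)^2 := by rw [h3]
    nlinarith only [hid, h4, sq_nonneg t]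
  have hY2 : (p'-p)^2 ≤ 2*u*(1-p*p') := by
    have := aux1' p q p' q' hp hp'
    rw [hudef]
    linarith only [this, (by ring : (2 - 2*(p*p'+q*q')) * (1 - p*p')
        = 2*(1 - (p*p'+q*q'))*(1-p*p')), (by ring : (p-p')^2 = (p'-p)^2)]
  have hXZ : ((p'-p)*(a*b'-a'*b))^2 ≤ (2*u) * (2*t*(1-p*p')) := by
    have h1 : ((p'-p)*(a*b'-a'*b))^2 = (p'-p)^2 * (a*b'-a'*b)^2 := by ring
    have h2 : (p'-p)^2 * (a*b'-a'*b)^2 ≤ (2*u*(1-p*p')) * (2*t) :=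
      mul_le_mul hY2 hY1 (sq_nonneg _) (mul_nonneg (by linarith) (by linarith))
    rw [h1]
    linarith only [h2, (by ring : (2*u*(1-p*p'))*(2*t) = (2*u)*(2*t*(1-p*p')))]
  have hpsd : 2*((p'-p)*(a*b'-a'*b))*y0*y1 ≤ (2*u)*y0^2 + (2*t*(1-p*p'))*y1^2 :=
    psd2' _ _ _ _ _ (by linarith) (mul_nonneg (by linarith) (by linarith)) hXZ
  have hwid : w0^2 + w1^2 + w2^2
      = ((b'-b)^2 + (a-a')^2)*y0^2
        + 2*((p'-p)*(a*b'-a'*b))*y0*y1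
        + ((a'*p'-a*p)^2 + (b'*p'-b*p)^2 + (q-q')^2)*y1^2 := by
    rw [hw0, hw1, hw2]; ring
  have hw : w0^2 + w1^2 + w2^2 ≤ (2*t+2*u) * (y0^2+y1^2) := by
    rw [hwid, hP00, hP11]
    linarith only [hpsd, (by ring : (2*t+2*u)*(y0^2+y1^2)
      = 2*t*y0^2 + 2*u*y0^2 + 2*t*y1^2 + 2*u*y1^2)]
  have hcs : (y0^2+y1^2)^2 ≤ (x0^2+x1^2+x2^2) * (w0^2+w1^2+w2^2) := by
    rw [hid1]; exact cs3' _ _ _ _ _ _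
  have hN0 : (0:ℝ) ≤ x0^2+x1^2+x2^2 := by positivity
  have hS0 : (0:ℝ) ≤ y0^2+y1^2 := by positivity
  have hc0 : (0:ℝ) ≤ 2*t+2*u := by linarith
  have hfin : y0^2+y1^2 ≤ (2*t+2*u) * (x0^2+x1^2+x2^2) := by
    rcases (eq_or_lt_of_le hS0).imp Eq.symm id with h0 | hpos
    · linarith only [h0, mul_nonneg hc0 hN0]
    · have h1 : (y0^2+y1^2)^2 ≤ (x0^2+x1^2+x2^2) * ((2*t+2*u) * (y0^2+y1^2)) :=
        hcs.trans (mul_le_mul_of_nonneg_left hw hN0)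
      have h2 : (y0^2+y1^2) * (y0^2+y1^2) ≤ ((2*t+2*u) * (x0^2+x1^2+x2^2)) * (y0^2+y1^2) := by
        linarith only [h1, (by ring : (y0^2+y1^2)^2 = (y0^2+y1^2)*(y0^2+y1^2)),
          (by ring : (x0^2+x1^2+x2^2) * ((2*t+2*u) * (y0^2+y1^2))
            = ((2*t+2*u) * (x0^2+x1^2+x2^2)) * (y0^2+y1^2))]
      exact le_of_mul_le_mul_right h2 hpos
  have hcle : 2*t+2*u ≤ 2*ε^2 := by rw [htdef, hudef]; linarith
  calc ((b'-b)*x0 + (a-a')*x1)^2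
      + ((a'*p'-a*p)*x0 + (b'*p'-b*p)*x1 + (q-q')*x2)^2
      = y0^2 + y1^2 := by rw [hy0, hy1]
    _ ≤ (2*t+2*u) * (x0^2+x1^2+x2^2) := hfin
    _ ≤ 2*ε^2*(x0^2+x1^2+x2^2) := mul_le_mul_of_nonneg_right hcle hN0

lemma trig_close {α β ε : ℝ} (h : |α - β| ≤ ε) :
    1 - (cos α * cos β + sin α * sin β) ≤ ε^2/2 := by
  have h1 : 1 - (α - β)^2/2 ≤ cos (α - β) := Real.one_sub_sq_div_two_le_cos
  have h2 : (α - β)^2 ≤ ε^2 := by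
    have := abs_nonneg (α - β)
    nlinarith [sq_abs (α - β), h]
  rw [Real.cos_sub] at h1
  linarith

noncomputable def M (θ φ : ℝ) : Matrix (Fin 2) (Fin 3) ℝ :=
  !![-sin θ, cos θ, 0; -cos θ * cos φ, -sin θ * cos φ, sin φ]

/-- `M θ φ` as a continuous linear map between Euclidean spaces. -/
noncomputable def T (θ φ : ℝ) : EuclideanSpace ℝ (Fin 3) →L[ℝ] EuclideanSpace ℝ (Fin 2) :=
  (Matrix.toEuclideanLin (M θ φ)).toContinuousLinearMap

theorem stmt6 (ε θ θ' φ φ' : ℝ) (hε : 0 < ε)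
    (hθ : |θ - θ'| ≤ ε) (hφ : |φ - φ'| ≤ ε) :
    ‖T θ φ - T θ' φ'‖ ≤ Real.sqrt 2 * ε := by
  apply ContinuousLinearMap.opNorm_le_bound _ (by positivity)
  intro x
  have hc0 : ((T θ φ - T θ' φ') x) 0
      = (sin θ' - sin θ) * x 0 + (cos θ - cos θ') * x 1 := by
    simp [T, M, Matrix.toEuclideanLin_apply, Matrix.mulVec, dotProduct, Fin.sum_univ_three]
    ring
  have hc1 : ((T θ φ - T θ' φ') x) 1
      = (cos θ' * cos φ' - cos θ * cos φ) * x 0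
        + (sin θ' * cos φ' - sin θ * cos φ) * x 1 + (sin φ - sin φ') * x 2 := by
    simp [T, M, Matrix.toEuclideanLin_apply, Matrix.mulVec, dotProduct, Fin.sum_univ_three]
    ring
  have hnv : ‖(T θ φ - T θ' φ') x‖
      = Real.sqrt ((((T θ φ - T θ' φ') x) 0)^2 + (((T θ φ - T θ' φ') x) 1)^2) := by
    rw [EuclideanSpace.norm_eq]
    simp [Fin.sum_univ_two, sq_abs]
  have hnx : ‖x‖ = Real.sqrt ((x 0)^2 + (x 1)^2 + (x 2)^2) := by
    rw [EuclideanSpace.norm_eq]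
    simp [Fin.sum_univ_three, sq_abs]
  have hkey : (((T θ φ - T θ' φ') x) 0)^2 + (((T θ φ - T θ' φ') x) 1)^2
      ≤ 2*ε^2*((x 0)^2 + (x 1)^2 + (x 2)^2) := by
    rw [hc0, hc1]
    exact core' (cos θ) (sin θ) (cos θ') (sin θ') (cos φ) (sin φ) (cos φ') (sin φ')
      (x 0) (x 1) (x 2) ε (by rw [← Real.sin_sq_add_cos_sq θ]; ring)
      (by rw [← Real.sin_sq_add_cos_sq θ']; ring)
      (by rw [← Real.sin_sq_add_cos_sq φ]; ring)
      (by rw [← Real.sin_sq_add_cos_sq φ']; ring)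
      (trig_close hθ) (trig_close hφ)
  rw [hnv, hnx]
  have h1 : Real.sqrt ((((T θ φ - T θ' φ') x) 0)^2 + (((T θ φ - T θ' φ') x) 1)^2)
      ≤ Real.sqrt (2*ε^2*((x 0)^2 + (x 1)^2 + (x 2)^2)) := Real.sqrt_le_sqrt hkey
  have h2 : Real.sqrt (2*ε^2*((x 0)^2 + (x 1)^2 + (x 2)^2))
      = Real.sqrt 2 * ε * Real.sqrt ((x 0)^2 + (x 1)^2 + (x 2)^2) := by
    rw [Real.sqrt_mul (by positivity), Real.sqrt_mul (by norm_num), Real.sqrt_sq hε.le]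
  rw [h2] at h1
  exact h1
end

section
/- The cube is Rupert: letting C ⊂ ℝ³ be the unit cube [−1,1]³, there exist rotations R₁, R₂ ∈ SO(3) and t ∈ ℝ² such that π(R₁(C)) + t is contained in the interior of π(R₂(C)), where π : ℝ³ → ℝ² drops the first coordinate. -/
set_option maxHeartbeats 1000000


open Matrix

/-- The cube `[-1,1]³`. -/
def cube : Set (Fin 3 → ℝ) := {x | ∀ i, x i ∈ Set.Icc (-1 : ℝ) 1}

/-- The projection dropping the first coordinate. -/
def proj (x : Fin 3 → ℝ) : Fin 2 → ℝ := ![x 1, x 2]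

theorem stmt13 :
    ∃ R₁ R₂ : Matrix (Fin 3) (Fin 3) ℝ,
      R₁ᵀ * R₁ = 1 ∧ R₁.det = 1 ∧ R₂ᵀ * R₂ = 1 ∧ R₂.det = 1 ∧
      ∃ t : Fin 2 → ℝ,
        (fun x => proj (R₁.mulVec x) + t) '' cube ⊆
          interior ((fun x => proj (R₂.mulVec x)) '' cube) := by
  refine ⟨!![1,0,0; 0,5/13,12/13; 0,-12/13,5/13],
    !![2/3,2/3,1/3; 22/39,-29/39,14/39; 19/39,-2/39,-34/39], ?_, ?_, ?_, ?_, 0, ?_⟩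
  · ext i j
    fin_cases i <;> fin_cases j <;>
      norm_num [Matrix.mul_apply, Fin.sum_univ_three, Matrix.one_apply, Matrix.transpose_apply,
        Matrix.vecHead, Matrix.vecTail, Fin.ext_iff, Matrix.cons_val_two]
  · norm_num [Matrix.det_fin_three, Matrix.cons_val_two]
  · ext i j
    fin_cases i <;> fin_cases j <;>
      norm_num [Matrix.mul_apply, Fin.sum_univ_three, Matrix.one_apply, Matrix.transpose_apply,
        Matrix.vecHead, Matrix.vecTail, Fin.ext_iff, Matrix.cons_val_two]
  · norm_num [Matrix.det_fin_three, Matrix.cons_val_two]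
  · -- the open intermediate set
    set U : Set (Fin 2 → ℝ) :=
      {y | |22/39*y 0 + 19/39*y 1| < 1 ∧ |(-29)/39*y 0 + (-2)/39*y 1| < 1 ∧
        |14/39*y 0 + (-34)/39*y 1| < 1} with hU
    have c1 : Continuous fun y : Fin 2 → ℝ => (22/39*y 0 + 19/39*y 1 : ℝ) := by fun_prop
    have c2 : Continuous fun y : Fin 2 → ℝ => ((-29)/39*y 0 + (-2)/39*y 1 : ℝ) := by fun_prop
    have c3 : Continuous fun y : Fin 2 → ℝ => (14/39*y 0 + (-34)/39*y 1 : ℝ) := by fun_prop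
    have hUopen : IsOpen U := by
      rw [hU]
      exact (isOpen_lt c1.abs continuous_const).and
        ((isOpen_lt c2.abs continuous_const).and (isOpen_lt c3.abs continuous_const))
    have hUsub : U ⊆ (fun x =>
        proj ((!![2/3,2/3,1/3; 22/39,-29/39,14/39; 19/39,-2/39,-34/39] :
          Matrix (Fin 3) (Fin 3) ℝ).mulVec x)) '' cube := by
      rintro y ⟨h1, h2, h3⟩
      have h1 := abs_lt.mp h1
      have h2 := abs_lt.mp h2
      have h3 := abs_lt.mp h3
      refine ⟨![22/39*y 0 + 19/39*y 1, (-29)/39*y 0 + (-2)/39*y 1,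
        14/39*y 0 + (-34)/39*y 1], ?_, ?_⟩
      · intro i
        fin_cases i <;> simp [Set.mem_Icc] <;> constructor <;> linarith [h1.1, h1.2, h2.1, h2.2, h3.1, h3.2]
      · funext i
        fin_cases i <;>
          simp [proj, Matrix.mulVec, dotProduct, Fin.sum_univ_three] <;> ring
    refine Set.Subset.trans ?_ (interior_maximal hUsub hUopen)
    rintro _ ⟨x, hx, rfl⟩
    have h1 := (hx 1).1; have h1' := (hx 1).2
    have h2 := (hx 2).1; have h2' := (hx 2).2
    have hy : proj ((!![1,0,0; 0,5/13,12/13; 0,-12/13,5/13] :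
        Matrix (Fin 3) (Fin 3) ℝ).mulVec x) + 0 =
        ![5/13*x 1 + 12/13*x 2, (-12)/13*x 1 + 5/13*x 2] := by
      funext i
      fin_cases i <;>
        simp [proj, Matrix.mulVec, dotProduct, Fin.sum_univ_three, Matrix.vecHead, Matrix.vecTail]
    show proj ((!![1,0,0; 0,5/13,12/13; 0,-12/13,5/13] :
        Matrix (Fin 3) (Fin 3) ℝ).mulVec x) + 0 ∈ U
    rw [hy, hU]
    refine ⟨?_, ?_, ?_⟩ <;>
      · simp only [Matrix.cons_val_zero, Matrix.cons_val_one, Matrix.head_cons]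
        rw [abs_lt]
        constructor <;> linarith
end

section
/- There exist orthonormal vectors u, v ∈ ℝ³ such that the projection of the unit cube [0,1]³ onto the plane spanned by u, v contains, in its interior, a translate of a square with side length (√6 − √2) > 1 (Wallis's bound for the cube's Rupert property). -/
open Real RealInnerProductSpace

/-- The unit cube `[0,1]³`. -/
def unitCube : Set (EuclideanSpace ℝ (Fin 3)) := {x | ∀ i, x i ∈ Set.Icc (0 : ℝ) 1}

/-- The square `[0,L]²`. -/
def square (L : ℝ) : Set (EuclideanSpace ℝ (Fin 2)) := {y | ∀ i, y i ∈ Set.Icc (0 : ℝ) L}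

theorem stmt14 :
    ∃ u v : EuclideanSpace ℝ (Fin 3), ‖u‖ = 1 ∧ ‖v‖ = 1 ∧ ⟪u, v⟫ = 0 ∧
      ∃ f : EuclideanSpace ℝ (Fin 2) → EuclideanSpace ℝ (Fin 2), Isometry f ∧
        f '' square (Real.sqrt 6 - Real.sqrt 2) ⊆
          interior {z : EuclideanSpace ℝ (Fin 2) |
            ∃ x ∈ unitCube, z = (WithLp.equiv 2 (Fin 2 → ℝ)).symm ![⟪x, u⟫, ⟪x, v⟫]} := by
  have h2 : Real.sqrt 2 ^ 2 = 2 := Real.sq_sqrt (by norm_num)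
  have h2pos : (0:ℝ) < Real.sqrt 2 := Real.sqrt_pos.mpr (by norm_num)
  set s2 := Real.sqrt 2 with hs2
  -- key numeric fact : √6 - √2 < 3√2/4
  set L : ℝ := Real.sqrt 6 - s2 with hL
  set L' : ℝ := 3 * s2 / 4 with hL'
  have hLL' : L < L' := by
    have h6 : Real.sqrt 6 < 7 * s2 / 4 := by
      rw [Real.sqrt_lt' (by positivity)]
      nlinarith
    rw [hL, hL']; linarith
  have hL'pos : 0 < L' := by positivity
  set δ : ℝ := (L' - L) / 2 with hδ
  have hδpos : 0 < δ := by rw [hδ]; linarith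
  set c1 : ℝ := s2 / 8 with hc1
  set c2 : ℝ := -(s2 / 24) with hc2
  refine ⟨(WithLp.equiv 2 (Fin 3 → ℝ)).symm ![s2/2, s2/2, 0],
          (WithLp.equiv 2 (Fin 3 → ℝ)).symm ![s2/6, -(s2/6), 2*s2/3], ?_, ?_, ?_,
          (fun y => y + (WithLp.equiv 2 (Fin 2 → ℝ)).symm ![c1 + δ, c2 + δ]), ?_, ?_⟩
  · rw [EuclideanSpace.norm_eq]
    simp [Fin.sum_univ_three]
    nlinarith
  · rw [EuclideanSpace.norm_eq]
    simp [Fin.sum_univ_three]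
    nlinarith
  · simp [PiLp.inner_apply, RCLike.inner_apply, Fin.sum_univ_three]
  · exact Isometry.of_dist_eq fun a b => by simp [dist_add_right]
  · -- main containment
    set Z : Set (EuclideanSpace ℝ (Fin 2)) := {z | ∃ x ∈ unitCube, z =
        (WithLp.equiv 2 (Fin 2 → ℝ)).symm ![⟪x, (WithLp.equiv 2 (Fin 3 → ℝ)).symm ![s2/2, s2/2, 0]⟫,
          ⟪x, (WithLp.equiv 2 (Fin 3 → ℝ)).symm ![s2/6, -(s2/6), 2*s2/3]⟫]} with hZ
    set O : Set (EuclideanSpace ℝ (Fin 2)) :=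
      {z | z 0 ∈ Set.Ioo c1 (c1 + L') ∧ z 1 ∈ Set.Ioo c2 (c2 + L')} with hO
    have hOopen : IsOpen O := by
      have : O = (⇑(EuclideanSpace.proj (0 : Fin 2) (𝕜 := ℝ)) ⁻¹' Set.Ioo c1 (c1 + L')) ∩
          (⇑(EuclideanSpace.proj (1 : Fin 2) (𝕜 := ℝ)) ⁻¹' Set.Ioo c2 (c2 + L')) := rfl
      rw [this]
      exact ((isOpen_Ioo.preimage (EuclideanSpace.proj 0).continuous).inter
        (isOpen_Ioo.preimage (EuclideanSpace.proj 1).continuous))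
    have hOZ : O ⊆ Z := by
      rintro z ⟨⟨hz01, hz02⟩, hz11, hz12⟩
      set s : ℝ := (z 0 - c1) / L' with hs
      set t : ℝ := (z 1 - c2) / L' with ht
      have hsL : s * L' = z 0 - c1 := div_mul_cancel₀ _ (ne_of_gt hL'pos)
      have htL : t * L' = z 1 - c2 := div_mul_cancel₀ _ (ne_of_gt hL'pos)
      have hs0 : 0 ≤ s := le_of_lt (div_pos (by linarith) hL'pos)
      have hs1 : s ≤ 1 := by rw [hs, div_le_one hL'pos]; linarith
      have ht0 : 0 ≤ t := le_of_lt (div_pos (by linarith) hL'pos)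
      have ht1 : t ≤ 1 := by rw [ht, div_le_one hL'pos]; linarith
      refine ⟨(WithLp.equiv 2 (Fin 3 → ℝ)).symm ![3*s/4 + t/4, 1/4 + 3*s/4 - t/4, t], ?_, ?_⟩
      · intro i
        fin_cases i <;> simp <;> constructor <;> linarith
      · have e1 : ⟪((WithLp.equiv 2 (Fin 3 → ℝ)).symm ![3*s/4 + t/4, 1/4 + 3*s/4 - t/4, t]),
            (WithLp.equiv 2 (Fin 3 → ℝ)).symm ![s2/2, s2/2, 0]⟫ = z 0 := by
          simp [PiLp.inner_apply, RCLike.inner_apply, Fin.sum_univ_three]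
          rw [hL'] at hsL
          rw [hc1] at hsL
          linear_combination hsL
        have e2 : ⟪((WithLp.equiv 2 (Fin 3 → ℝ)).symm ![3*s/4 + t/4, 1/4 + 3*s/4 - t/4, t]),
            (WithLp.equiv 2 (Fin 3 → ℝ)).symm ![s2/6, -(s2/6), 2*s2/3]⟫ = z 1 := by
          simp [PiLp.inner_apply, RCLike.inner_apply, Fin.sum_univ_three]
          rw [hL'] at htL
          rw [hc2] at htL
          linear_combination htL
        rw [e1, e2]
        refine PiLp.ext fun i => ?_
        fin_cases i <;> rfl
    have hOint : O ⊆ interior Z := interior_maximal hOZ hOopen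
    rintro w ⟨y, hy, rfl⟩
    apply hOint
    show y + (WithLp.equiv 2 (Fin 2 → ℝ)).symm ![c1 + δ, c2 + δ] ∈ O
    have hy0 := hy 0
    have hy1 := hy 1
    simp only [Set.mem_Icc] at hy0 hy1
    have hadd : ∀ i : Fin 2, (y + (WithLp.equiv 2 (Fin 2 → ℝ)).symm ![c1 + δ, c2 + δ]) i
        = y i + ![c1 + δ, c2 + δ] i := fun i => rfl
    constructor
    · rw [hadd 0]
      simp only [Matrix.cons_val_zero, Set.mem_Ioo]
      constructor <;> [linarith; (rw [hδ] at *; linarith)]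
    · rw [hadd 1]
      simp only [Matrix.cons_val_one, Matrix.head_cons, Matrix.cons_val_zero, Set.mem_Ioo]
      constructor <;> [linarith; (rw [hδ] at *; linarith)]
end

section
/- For every R ∈ SO(3), there exist angles α, θ, φ such that P ∘ R = R_α ∘ M_{θ,φ} as linear maps ℝ³ → ℝ², where P drops the x-coordinate. -/
open Real Matrix

/-- Counterclockwise rotation by `α` in the plane, as a matrix. -/
noncomputable def Rot (α : ℝ) : Matrix (Fin 2) (Fin 2) ℝ :=
  !![cos α, -sin α; sin α, cos α]

/-- The projection dropping the x-coordinate, as a matrix. -/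
def Pproj : Matrix (Fin 2) (Fin 3) ℝ := !![0, 1, 0; 0, 0, 1]

lemma exists_cos_sin (c s : ℝ) (h : c ^ 2 + s ^ 2 = 1) :
    ∃ x : ℝ, Real.cos x = c ∧ Real.sin x = s := by
  have hz : (⟨c, s⟩ : ℂ) ≠ 0 := by
    intro hzz
    rw [Complex.ext_iff] at hzz
    simp at hzz
    rw [hzz.1, hzz.2] at h
    norm_num at h
  have habs : ‖(⟨c, s⟩ : ℂ)‖ = 1 := by
    rw [Complex.norm_def, Complex.normSq_mk]
    rw [show c * c + s * s = 1 by nlinarith]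
    exact Real.sqrt_one
  refine ⟨Complex.arg ⟨c, s⟩, ?_, ?_⟩
  · rw [Complex.cos_arg hz, habs]; simp
  · rw [Complex.sin_arg, habs]; simp

set_option maxHeartbeats 1000000 in
theorem stmt18 (R : Matrix (Fin 3) (Fin 3) ℝ) (h1 : Rᵀ * R = 1) (h2 : R.det = 1) :
    ∃ α θ φ : ℝ, Pproj * R = Rot α * M θ φ := by
  have h1' : R * Rᵀ = 1 := mul_eq_one_comm.mp h1
  have row0 : R 0 0 ^ 2 + R 0 1 ^ 2 + R 0 2 ^ 2 = 1 := by
    have := congrFun (congrFun h1' 0) 0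
    simp [Matrix.mul_apply, Fin.sum_univ_three, Matrix.one_apply] at this
    nlinarith [this]
  have C0 : R 0 0 ^ 2 + R 1 0 ^ 2 + R 2 0 ^ 2 = 1 := by
    have := congrFun (congrFun h1 0) 0
    simp [Matrix.mul_apply, Fin.sum_univ_three, Matrix.one_apply] at this
    nlinarith [this]
  have C1 : R 0 1 ^ 2 + R 1 1 ^ 2 + R 2 1 ^ 2 = 1 := by
    have := congrFun (congrFun h1 1) 1
    simp [Matrix.mul_apply, Fin.sum_univ_three, Matrix.one_apply] at this
    nlinarith [this]
  have C01 : R 0 0 * R 0 1 + R 1 0 * R 1 1 + R 2 0 * R 2 1 = 0 := by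
    have := congrFun (congrFun h1 0) 1
    simp [Matrix.mul_apply, Fin.sum_univ_three, Matrix.one_apply] at this
    linarith [this]
  have hadj : Rᵀ = adjugate R := by
    have hR : R * adjugate R = 1 := by
      rw [Matrix.mul_adjugate, h2, one_smul]
    calc Rᵀ = Rᵀ * (R * adjugate R) := by rw [hR, mul_one]
    _ = (Rᵀ * R) * adjugate R := by rw [mul_assoc]
    _ = adjugate R := by rw [h1, one_mul]
  rw [adjugate_fin_three] at hadj
  have f10 : R 1 0 = -(R 0 1 * R 2 2) + R 0 2 * R 2 1 := by
    have := congrFun (congrFun hadj 0) 1; simpa using this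
  have f11 : R 1 1 = R 0 0 * R 2 2 - R 0 2 * R 2 0 := by
    have := congrFun (congrFun hadj 1) 1; simpa using this
  have f12 : R 1 2 = -(R 0 0 * R 2 1) + R 0 1 * R 2 0 := by
    have := congrFun (congrFun hadj 2) 1; simpa using this
  have f20 : R 2 0 = R 0 1 * R 1 2 - R 0 2 * R 1 1 := by
    have := congrFun (congrFun hadj 0) 2; simpa using this
  have f21 : R 2 1 = -(R 0 0 * R 1 2) + R 0 2 * R 1 0 := by
    have := congrFun (congrFun hadj 1) 2; simpa using this
  have f22 : R 2 2 = R 0 0 * R 1 1 - R 0 1 * R 1 0 := by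
    have := congrFun (congrFun hadj 2) 2; simpa using this
  set r : ℝ := Real.sqrt (R 0 0 ^ 2 + R 0 1 ^ 2) with hrdef
  have hr0 : 0 ≤ r := Real.sqrt_nonneg _
  have hr2 : r ^ 2 = R 0 0 ^ 2 + R 0 1 ^ 2 := Real.sq_sqrt (by positivity)
  -- choose θ
  obtain ⟨θ, q1, q2⟩ : ∃ θ, r * Real.cos θ = R 0 0 ∧ r * Real.sin θ = R 0 1 := by
    rcases eq_or_lt_of_le hr0 with h | h
    · have h00 : R 0 0 = 0 := by nlinarith [hr2, sq_nonneg (R 0 0), sq_nonneg (R 0 1)]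
      have h01 : R 0 1 = 0 := by nlinarith [hr2, sq_nonneg (R 0 0), sq_nonneg (R 0 1)]
      exact ⟨0, by rw [← h, zero_mul, h00], by rw [← h, zero_mul, h01]⟩
    · have hne : r ≠ 0 := h.ne'
      obtain ⟨θ, hc, hs⟩ := exists_cos_sin (R 0 0 / r) (R 0 1 / r)
        (by rw [div_pow, div_pow, ← add_div, ← hr2, div_self (pow_ne_zero _ hne)])
      exact ⟨θ, by rw [hc, mul_div_cancel₀ _ hne], by rw [hs, mul_div_cancel₀ _ hne]⟩
  -- choose φ
  have hcφ : Real.cos (Real.arccos (R 0 2)) = R 0 2 :=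
    Real.cos_arccos (by nlinarith [sq_nonneg (R 0 0), sq_nonneg (R 0 1), sq_nonneg (R 0 2 + 1)])
      (by nlinarith [sq_nonneg (R 0 0), sq_nonneg (R 0 1), sq_nonneg (R 0 2 - 1)])
  have hsφ : Real.sin (Real.arccos (R 0 2)) = r := by
    rw [Real.sin_arccos, hrdef]
    congr 1
    linarith [row0]
  -- choose α
  have hp := Real.sin_sq_add_cos_sq θ
  have hcs : (Real.cos θ * R 1 1 - Real.sin θ * R 1 0) ^ 2
      + (Real.cos θ * R 2 1 - Real.sin θ * R 2 0) ^ 2 = 1 := by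
    linear_combination hp + (Real.cos θ) ^ 2 * C1 + (Real.sin θ) ^ 2 * C0
      - 2 * Real.cos θ * Real.sin θ * C01
      - (Real.cos θ * R 0 1 - Real.sin θ * R 0 0) * (Real.sin θ * q1 - Real.cos θ * q2)
  obtain ⟨α, hcα, hsα⟩ := exists_cos_sin _ _ hcs
  refine ⟨α, θ, Real.arccos (R 0 2), ?_⟩
  ext i j
  fin_cases i <;> fin_cases j <;>
    simp [Pproj, Rot, M, Matrix.mul_apply, Fin.sum_univ_three, Fin.sum_univ_two, hcφ, hsφ]
  · linear_combination (-(R 1 0)) * hp + (Real.cos θ)^2 * f10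
      + Real.cos θ * Real.sin θ * f11 - Real.cos θ * Real.sin θ * R 2 2 * q1
      + (Real.cos θ)^2 * R 2 2 * q2 + Real.sin θ * hcα
      - Real.cos θ * R 0 2 * hsα
  · linear_combination (-(R 1 1)) * hp + Real.cos θ * Real.sin θ * f10
      + (Real.sin θ)^2 * f11 - (Real.sin θ)^2 * R 2 2 * q1
      + Real.cos θ * Real.sin θ * R 2 2 * q2 - Real.cos θ * hcα
      - Real.sin θ * R 0 2 * hsα
  · linear_combination f12 + R 2 1 * q1 - R 2 0 * q2 + r * hsα
  · linear_combination (-(R 2 0)) * hp + (Real.cos θ)^2 * f20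
      + Real.cos θ * Real.sin θ * f21 + Real.cos θ * Real.sin θ * R 1 2 * q1
      - (Real.cos θ)^2 * R 1 2 * q2 + Real.sin θ * hsα
      + Real.cos θ * R 0 2 * hcα
  · linear_combination (-(R 2 1)) * hp + Real.cos θ * Real.sin θ * f20
      + (Real.sin θ)^2 * f21 + (Real.sin θ)^2 * R 1 2 * q1
      - Real.cos θ * Real.sin θ * R 1 2 * q2 - Real.cos θ * hsα
      + Real.sin θ * R 0 2 * hcα
  · linear_combination f22 - R 1 1 * q1 + R 1 0 * q2 - r * hcα
end
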